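/- For the t-distribution with m ≥ 5 degrees of freedom, the upper tail of its square satisfies 2T̃_m(√t) < √(2/π)·(t/m)^{-m/2} for t > m, and consequently the quantile function λ(α) := (T̃_m^{-1}(α/2))² satisfies λ(α) ≲ α^{-2/m}; in particular for m = 5, λ(lα₁/N) ≲ (N/(lα₁))^{2/5}. -/
import Mathlib


open MeasureTheory

/-- Density of Student's t-distribution with `m` degrees of freedom. -/
noncomputable def tPDF (m : ℕ) (t : ℝ) : ℝ :=
  Real.Gamma (((m : ℝ) + 1) / 2) / (Real.sqrt (Real.pi * m) * Real.Gamma ((m : ℝ) / 2)) *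
    (1 + t ^ 2 / m) ^ (-(((m : ℝ) + 1) / 2))

/-- Upper tail function of Student's t-distribution with `m` degrees of freedom. -/
noncomputable def tTail (m : ℕ) (t : ℝ) : ℝ := ∫ s in Set.Ioi t, tPDF m s

section Aux
open Real Set

lemma gamma_half_sq {x : ℝ} (hx : 0 < x) :
    Real.Gamma (x + 1/2) ^ 2 ≤ Real.Gamma x * Real.Gamma (x + 1) := by
  have hx1 : (0:ℝ) < x + 1 := by linarith
  have h := Real.convexOn_log_Gamma.2 (Set.mem_Ioi.2 hx) (Set.mem_Ioi.2 hx1)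
      (by norm_num : (0:ℝ) ≤ 1/2) (by norm_num : (0:ℝ) ≤ 1/2) (by norm_num)
  simp only [Function.comp, smul_eq_mul] at h
  have harg : 1/2 * x + 1/2 * (x+1) = x + 1/2 := by ring
  rw [harg] at h
  have hg1 : 0 < Real.Gamma x := Real.Gamma_pos_of_pos hx
  have hg2 : 0 < Real.Gamma (x+1) := Real.Gamma_pos_of_pos hx1
  have hg3 : 0 < Real.Gamma (x+1/2) := Real.Gamma_pos_of_pos (by linarith)
  have := Real.exp_le_exp.2 (by linarith :
    2 * Real.log (Real.Gamma (x+1/2)) ≤ Real.log (Real.Gamma x) + Real.log (Real.Gamma (x+1)))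
  rwa [Real.exp_add, Real.exp_log hg1, Real.exp_log hg2, two_mul, Real.exp_add,
    Real.exp_log hg3, ← sq] at this

/-- `2 Γ((m+1)/2) < √2 m Γ(m/2)` for `m ≥ 2`. -/
lemma gamma_ratio_lt {m : ℕ} (hm : 2 ≤ m) :
    2 * Real.Gamma (((m:ℝ) + 1) / 2) < Real.sqrt 2 * m * Real.Gamma ((m:ℝ)/2) := by
  have hM : (2:ℝ) ≤ m := by exact_mod_cast hm
  have hM0 : (0:ℝ) < (m:ℝ)/2 := by linarith
  have hg : 0 < Real.Gamma ((m:ℝ)/2) := Real.Gamma_pos_of_pos hM0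
  have hg1 : 0 < Real.Gamma (((m:ℝ)+1)/2) := Real.Gamma_pos_of_pos (by linarith)
  have h1 := gamma_half_sq hM0
  rw [Real.Gamma_add_one (ne_of_gt hM0)] at h1
  have harg : (m:ℝ)/2 + 1/2 = ((m:ℝ)+1)/2 := by ring
  rw [harg] at h1
  -- h1 : Γ((m+1)/2)^2 ≤ Γ(m/2) * (m/2 * Γ(m/2))
  have hsq : (2 * Real.Gamma (((m:ℝ) + 1) / 2)) ^ 2 <
      (Real.sqrt 2 * m * Real.Gamma ((m:ℝ)/2)) ^ 2 := by
    have h2 : (Real.sqrt 2) ^ 2 = 2 := Real.sq_sqrt (by norm_num)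
    have hlt : 2 * (m:ℝ) * Real.Gamma ((m:ℝ)/2) ^ 2 <
        2 * (m:ℝ)^2 * Real.Gamma ((m:ℝ)/2) ^ 2 := by
      have : (m:ℝ) < (m:ℝ)^2 := by nlinarith
      nlinarith [sq_nonneg (Real.Gamma ((m:ℝ)/2))]
    calc (2 * Real.Gamma (((m:ℝ) + 1) / 2)) ^ 2
        = 4 * Real.Gamma (((m:ℝ) + 1) / 2) ^ 2 := by ring
      _ ≤ 2 * (m:ℝ) * Real.Gamma ((m:ℝ)/2) ^ 2 := by nlinarith
      _ < 2 * (m:ℝ)^2 * Real.Gamma ((m:ℝ)/2) ^ 2 := hlt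
      _ = (Real.sqrt 2 * m * Real.Gamma ((m:ℝ)/2)) ^ 2 := by rw [mul_pow, mul_pow, h2]
  have hpos : 0 ≤ Real.sqrt 2 * m * Real.Gamma ((m:ℝ)/2) := by positivity
  exact lt_of_pow_lt_pow_left₀ 2 hpos hsq

lemma tail_int_le (m : ℕ) (hm : 1 ≤ m) {a : ℝ} (ha : 0 < a) :
    ∫ s in Set.Ioi a, (1 + s ^ 2 / (m:ℝ)) ^ (-(((m : ℝ) + 1) / 2))
      ≤ (m:ℝ) ^ (((m:ℝ)+1)/2) * (a ^ (-(m:ℝ)) / m) := by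
  have hM : (0:ℝ) < m := by exact_mod_cast hm
  set e : ℝ := -(((m : ℝ) + 1) / 2) with he
  have hr : -((m:ℝ)+1) < -1 := by linarith [hM]
  set g : ℝ → ℝ := fun s => (m:ℝ) ^ (((m:ℝ)+1)/2) * s ^ (-((m:ℝ)+1)) with hgdef
  have hg_int : IntegrableOn g (Ioi a) :=
    (integrableOn_Ioi_rpow_of_lt hr ha).const_mul _
  have hpt : ∀ s ∈ Ioi a, (1 + s ^ 2 / (m:ℝ)) ^ e ≤ g s := by
    intro s hs
    have hs0 : 0 < s := lt_trans ha hs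
    have h1 : (0:ℝ) < s ^ 2 / m := by positivity
    have h2 : (1 + s ^ 2 / (m:ℝ)) ^ e ≤ (s ^ 2 / (m:ℝ)) ^ e :=
      Real.rpow_le_rpow_of_nonpos h1 (by linarith) (neg_nonpos.2 (by positivity))
    refine h2.trans_eq ?_
    show _ = (m:ℝ) ^ (((m:ℝ)+1)/2) * s ^ (-((m:ℝ)+1))
    have : (s ^ 2 / (m:ℝ)) ^ e = (s^2:ℝ) ^ e / (m:ℝ) ^ e :=
      Real.div_rpow (by positivity) hM.le e
    rw [this]
    have hs2 : (s^2:ℝ) ^ e = s ^ (-((m:ℝ)+1)) := by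
      rw [← Real.rpow_natCast s 2, ← Real.rpow_mul hs0.le]
      norm_num [he]
      ring_nf
    rw [hs2, he]
    rw [Real.rpow_neg hM.le]
    field_simp
  have hcont : Continuous fun s : ℝ => (1 + s ^ 2 / (m:ℝ)) ^ e := by
    apply Continuous.rpow_const (by continuity)
    intro x
    left
    positivity
  have hf_int : IntegrableOn (fun s => (1 + s ^ 2 / (m:ℝ)) ^ e) (Ioi a) := by
    refine hg_int.mono' hcont.aestronglyMeasurable ?_
    rw [ae_restrict_iff' measurableSet_Ioi]
    filter_upwards with s hs
    rw [Real.norm_eq_abs, abs_of_nonneg (Real.rpow_nonneg (by positivity) _)]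
    exact hpt s hs
  calc ∫ s in Set.Ioi a, (1 + s ^ 2 / (m:ℝ)) ^ e
      ≤ ∫ s in Set.Ioi a, g s :=
        setIntegral_mono_on hf_int hg_int measurableSet_Ioi hpt
    _ = (m:ℝ) ^ (((m:ℝ)+1)/2) * ∫ s in Set.Ioi a, s ^ (-((m:ℝ)+1)) := by
        rw [hgdef]; exact integral_const_mul _ _
    _ = (m:ℝ) ^ (((m:ℝ)+1)/2) * (a ^ (-(m:ℝ)) / m) := by
        rw [integral_Ioi_rpow_of_lt hr ha]
        ring_nf

/-- Part 1. -/
lemma part1 (m : ℕ) (hm : 5 ≤ m) (t : ℝ) (ht : (m : ℝ) < t) :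
    2 * tTail m (Real.sqrt t) < Real.sqrt (2 / Real.pi) * (t / m) ^ (-(m : ℝ) / 2) := by
  have hm1 : 1 ≤ m := by omega
  have hM : (0:ℝ) < m := by exact_mod_cast Nat.lt_of_lt_of_le Nat.zero_lt_one hm1
  have ht0 : (0:ℝ) < t := lt_trans hM ht
  have ha : 0 < Real.sqrt t := Real.sqrt_pos.2 ht0
  set C : ℝ := Real.Gamma (((m : ℝ) + 1) / 2) /
      (Real.sqrt (Real.pi * m) * Real.Gamma ((m : ℝ) / 2)) with hC
  have hCpos : 0 < C := by
    apply div_pos (Real.Gamma_pos_of_pos (by positivity))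
    exact mul_pos (Real.sqrt_pos.2 (by positivity)) (Real.Gamma_pos_of_pos (by positivity))
  -- tTail bound
  have h1 : tTail m (Real.sqrt t) ≤
      C * ((m:ℝ) ^ (((m:ℝ)+1)/2) * ((Real.sqrt t) ^ (-(m:ℝ)) / m)) := by
    have : tTail m (Real.sqrt t)
        = C * ∫ s in Set.Ioi (Real.sqrt t), (1 + s ^ 2 / (m:ℝ)) ^ (-(((m : ℝ) + 1) / 2)) := by
      rw [tTail]
      simp only [tPDF, ← hC]
      exact integral_const_mul _ _
    rw [this]
    exact mul_le_mul_of_nonneg_left (tail_int_le m hm1 ha) hCpos.le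
  -- rewrite (√t)^(-m) = t^(-m/2)
  have hsqrt : (Real.sqrt t) ^ (-(m:ℝ)) = t ^ (-(m:ℝ)/2) := by
    rw [Real.sqrt_eq_rpow, ← Real.rpow_mul ht0.le]
    ring_nf
  -- rewrite RHS
  have hrhs : (t / m) ^ (-(m : ℝ) / 2) = t ^ (-(m:ℝ)/2) * ((m:ℝ) ^ ((m:ℝ)/2)) := by
    rw [Real.div_rpow ht0.le hM.le, show -(m:ℝ)/2 = -((m:ℝ)/2) by ring,
      Real.rpow_neg hM.le, div_eq_mul_inv, inv_inv,
      show -((m:ℝ)/2) = -(m:ℝ)/2 by ring]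
  have hpow : (0:ℝ) < (m:ℝ) ^ (((m:ℝ)-1)/2) := Real.rpow_pos_of_pos hM _
  have h2C : 2 * C < Real.sqrt (2/Real.pi) * Real.sqrt m := by
    have hD : 0 < Real.sqrt (Real.pi * m) * Real.Gamma ((m : ℝ) / 2) :=
      mul_pos (Real.sqrt_pos.2 (by positivity)) (Real.Gamma_pos_of_pos (by positivity))
    rw [hC, ← mul_div_assoc, div_lt_iff₀ hD]
    have hs : Real.sqrt (2/Real.pi) * Real.sqrt (Real.pi * m) = Real.sqrt (2 * m) := by
      rw [← Real.sqrt_mul (by positivity)]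
      congr 1
      field_simp
    have hs2 : Real.sqrt (2*(m:ℝ)) * Real.sqrt m = Real.sqrt 2 * m := by
      rw [Real.sqrt_mul (by norm_num), mul_assoc, Real.mul_self_sqrt hM.le]
    have key2 : Real.sqrt (2/Real.pi) * Real.sqrt (m:ℝ) *
        (Real.sqrt (Real.pi*m) * Real.Gamma ((m:ℝ)/2))
        = Real.sqrt 2 * m * Real.Gamma ((m:ℝ)/2) := by
      calc Real.sqrt (2/Real.pi) * Real.sqrt (m:ℝ) *
            (Real.sqrt (Real.pi*m) * Real.Gamma ((m:ℝ)/2))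
          = Real.sqrt (2/Real.pi) * Real.sqrt (Real.pi*m) * Real.sqrt (m:ℝ) *
            Real.Gamma ((m:ℝ)/2) := by ring
        _ = Real.sqrt (2*(m:ℝ)) * Real.sqrt (m:ℝ) * Real.Gamma ((m:ℝ)/2) := by rw [hs]
        _ = Real.sqrt 2 * m * Real.Gamma ((m:ℝ)/2) := by rw [hs2]
    rw [key2]
    exact gamma_ratio_lt (by omega)
  have key : 2 * C * ((m:ℝ) ^ (((m:ℝ)+1)/2) / m) < Real.sqrt (2/Real.pi) * (m:ℝ) ^ ((m:ℝ)/2) := by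
    have e1 : (m:ℝ) ^ (((m:ℝ)+1)/2) / m = (m:ℝ) ^ (((m:ℝ)-1)/2) := by
      rw [show ((m:ℝ)-1)/2 = ((m:ℝ)+1)/2 - 1 by ring, Real.rpow_sub hM, Real.rpow_one]
    have e2 : (m:ℝ) ^ ((m:ℝ)/2) = (m:ℝ) ^ (((m:ℝ)-1)/2) * Real.sqrt m := by
      rw [Real.sqrt_eq_rpow, ← Real.rpow_add hM]
      congr 1
      ring
    rw [e1, e2]
    calc 2 * C * (m:ℝ) ^ (((m:ℝ)-1)/2)
        < Real.sqrt (2/Real.pi) * Real.sqrt m * (m:ℝ) ^ (((m:ℝ)-1)/2) :=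
          mul_lt_mul_of_pos_right h2C hpow
      _ = Real.sqrt (2/Real.pi) * ((m:ℝ) ^ (((m:ℝ)-1)/2) * Real.sqrt m) := by ring
  have htp : (0:ℝ) < t ^ (-(m:ℝ)/2) := Real.rpow_pos_of_pos ht0 _
  calc 2 * tTail m (Real.sqrt t)
      ≤ 2 * (C * ((m:ℝ) ^ (((m:ℝ)+1)/2) * ((Real.sqrt t) ^ (-(m:ℝ)) / m))) := by linarith
    _ = 2 * C * ((m:ℝ) ^ (((m:ℝ)+1)/2) / m) * t ^ (-(m:ℝ)/2) := by rw [hsqrt]; ring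
    _ < Real.sqrt (2/Real.pi) * (m:ℝ) ^ ((m:ℝ)/2) * t ^ (-(m:ℝ)/2) :=
        mul_lt_mul_of_pos_right key htp
    _ = Real.sqrt (2 / Real.pi) * (t / m) ^ (-(m : ℝ) / 2) := by rw [hrhs]; ring

lemma part2 (m : ℕ) (hm : 5 ≤ m) : ∀ α ∈ Set.Ioc (0 : ℝ) 1, ∀ t : ℝ, 0 ≤ t →
    α ≤ 2 * tTail m (Real.sqrt t) → t ≤ (m:ℝ) * α ^ (-(2 : ℝ) / (m : ℝ)) := by
  rintro α ⟨hα0, hα1⟩ t ht0 hαt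
  have hM : (0:ℝ) < m := by
    have : (5:ℝ) ≤ m := by exact_mod_cast hm
    linarith
  have hone : 1 ≤ α ^ (-(2 : ℝ) / (m : ℝ)) := by
    rw [show (1:ℝ) = (1:ℝ) ^ (-(2 : ℝ) / (m : ℝ)) by rw [Real.one_rpow]]
    rcases eq_or_lt_of_le hα1 with h | h
    · rw [h]
    · exact le_of_lt (Real.rpow_lt_rpow_of_neg hα0 h (by
        apply div_neg_of_neg_of_pos <;> [norm_num; exact hM]))
  rcases le_or_gt t (m:ℝ) with h | h
  · calc t ≤ (m:ℝ) := h
      _ = (m:ℝ) * 1 := by ring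
      _ ≤ (m:ℝ) * α ^ (-(2 : ℝ) / (m : ℝ)) := by
          exact mul_le_mul_of_nonneg_left hone hM.le
  · have hp1 := part1 m hm t h
    have htm : (1:ℝ) < t / m := (one_lt_div hM).2 h
    have hppos : (0:ℝ) < (t / (m:ℝ)) ^ (-(m : ℝ) / 2) := Real.rpow_pos_of_pos (by linarith) _
    have hs1 : Real.sqrt (2 / Real.pi) ≤ 1 := by
      rw [Real.sqrt_le_one]
      rw [div_le_one Real.pi_pos]
      linarith [Real.pi_gt_three]
    have hα : α < (t / (m:ℝ)) ^ (-(m : ℝ) / 2) := by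
      calc α ≤ 2 * tTail m (Real.sqrt t) := hαt
        _ < Real.sqrt (2 / Real.pi) * (t / m) ^ (-(m : ℝ) / 2) := hp1
        _ ≤ 1 * (t / m) ^ (-(m : ℝ) / 2) := mul_le_mul_of_nonneg_right hs1 hppos.le
        _ = (t / m) ^ (-(m : ℝ) / 2) := one_mul _
    have h2 := Real.rpow_lt_rpow_of_neg hα0 hα
      (div_neg_of_neg_of_pos (by norm_num) hM : -(2:ℝ)/(m:ℝ) < 0)
    have h3 : ((t / (m:ℝ)) ^ (-(m : ℝ) / 2)) ^ (-(2 : ℝ) / (m : ℝ)) = t / m := by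
      rw [← Real.rpow_mul (by linarith : (0:ℝ) ≤ t/m)]
      rw [show (-(m : ℝ) / 2) * (-(2 : ℝ) / (m : ℝ)) = 1 by field_simp]
      exact Real.rpow_one _
    rw [h3] at h2
    calc t = (m:ℝ) * (t / m) := by field_simp
      _ ≤ (m:ℝ) * α ^ (-(2 : ℝ) / (m : ℝ)) := mul_le_mul_of_nonneg_left h2.le hM.le

end Aux

/-- Tail bound for the square of a t-variable with `m ≥ 5` degrees of freedom, and the resulting
bound `λ(α) ≲ α^{-2/m}` on the quantile function `λ(α)`, the value `t` with `2 T̃_m(√t) = α`;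
in particular for `m = 5`, `λ(l α₁ / N) ≲ (N/(l α₁))^{2/5}`. -/
theorem stmt_5 :
    (∀ m : ℕ, 5 ≤ m → ∀ t : ℝ, (m : ℝ) < t →
      2 * tTail m (Real.sqrt t) < Real.sqrt (2 / Real.pi) * (t / m) ^ (-(m : ℝ) / 2)) ∧
    (∀ m : ℕ, 5 ≤ m → ∃ c : ℝ, 0 < c ∧ ∀ α ∈ Set.Ioc (0 : ℝ) 1, ∀ t : ℝ, 0 ≤ t →
      α ≤ 2 * tTail m (Real.sqrt t) → t ≤ c * α ^ (-(2 : ℝ) / (m : ℝ))) ∧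
    (∃ c : ℝ, 0 < c ∧ ∀ N l : ℕ, 1 ≤ l → l ≤ N → ∀ α₁ : ℝ, α₁ ∈ Set.Ioc (0 : ℝ) 1 →
      ∀ t : ℝ, 0 ≤ t → (l : ℝ) * α₁ / N ≤ 2 * tTail 5 (Real.sqrt t) →
        t ≤ c * ((N : ℝ) / ((l : ℝ) * α₁)) ^ ((2 : ℝ) / 5)) := by
  refine ⟨part1, fun m hm => ⟨(m:ℝ), by
    have : (5:ℝ) ≤ m := by exact_mod_cast hm
    linarith, part2 m hm⟩, ⟨5, by norm_num, ?_⟩⟩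
  rintro N l hl hlN α₁ ⟨hα₁0, hα₁1⟩ t ht0 hαt
  have hN : (0:ℝ) < N := by
    have : 1 ≤ N := le_trans hl hlN
    exact_mod_cast Nat.lt_of_lt_of_le Nat.zero_lt_one this
  have hl' : (1:ℝ) ≤ l := by exact_mod_cast hl
  have hlα : 0 < (l : ℝ) * α₁ := by positivity
  set α : ℝ := (l : ℝ) * α₁ / N with hαdef
  have hα0 : 0 < α := by positivity
  have hα1 : α ≤ 1 := by
    rw [hαdef, div_le_one hN]
    calc (l:ℝ) * α₁ ≤ (l:ℝ) * 1 := mul_le_mul_of_nonneg_left hα₁1 (by linarith)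
      _ = (l:ℝ) := by ring
      _ ≤ (N:ℝ) := by exact_mod_cast hlN
  have h2 := part2 5 le_rfl α ⟨hα0, hα1⟩ t ht0 hαt
  have h3 : α ^ (-(2 : ℝ) / ((5:ℕ) : ℝ)) = ((N : ℝ) / ((l : ℝ) * α₁)) ^ ((2 : ℝ) / 5) := by
    rw [show (-(2 : ℝ) / ((5:ℕ) : ℝ)) = -((2:ℝ)/5) by norm_num,
      Real.rpow_neg hα0.le, ← Real.inv_rpow hα0.le, hαdef, inv_div]
  rw [h3] at h2
  exact_mod_cast h2
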